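/- A vector ξ ∈ ℂ² ⊗ ℂ² ⊗ ℂ² lies in S_V = V^⊥ if and only if there exist (a, b, c, d) ∈ ℂ⁴ such that, in the standard basis, ξ = (d + 2(a+b+c))|000⟩ + a|100⟩ + b|010⟩ + c|001⟩ − a|110⟩ − b|011⟩ − c|101⟩ + d|111⟩. Moreover, the map sending (a, b, c, d) ∈ ℂ⁴ to this vector is a linear bijection from ℂ⁴ onto S_V. -/

import Mathlib

/-!
Each of φ₁, φ₂, φ₃ has exactly two nonzero coordinates, both equal to 1/√2, so orthogonality to
it says that two coordinates of ξ are opposite: ξ₀₁₁ = -ξ₀₁₀, ξ₁₁₀ = -ξ₁₀₀, ξ₁₀₁ = -ξ₀₀₁.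
Orthogonality to φ₄ is the vanishing of the signed sum of all eight coordinates, which then
determines ξ₀₀₀. So ξ ∈ S_V is the vector `svVec a b c d` built from its free coordinates
a = ξ₁₀₀, b = ξ₀₁₀, c = ξ₀₀₁, d = ξ₁₁₁, and reading these coordinates back inverts `svVec`.
-/

noncomputable section

abbrev Q : Type := EuclideanSpace ℂ (Fin 2)
abbrev Q2 : Type := EuclideanSpace ℂ (Fin 2 × Fin 2)
abbrev Q3 : Type := EuclideanSpace ℂ (Fin 2 × Fin 2 × Fin 2)

/-- standard basis vector of ℂ² -/
def ket2 (i : Fin 2) : Q := EuclideanSpace.single i 1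

/-- the state |+⟩ -/
def plus : Q := (Real.sqrt 2 : ℂ)⁻¹ • (ket2 0 + ket2 1)

/-- the state |−⟩ -/
def minus : Q := (Real.sqrt 2 : ℂ)⁻¹ • (ket2 0 - ket2 1)

/-- elementary tensor of three qubit vectors, in ℂ² ⊗ ℂ² ⊗ ℂ² ≅ ℂ⁸ -/
def tp3 (u v w : Q) : Q3 := WithLp.toLp 2 (fun p : Fin 2 × Fin 2 × Fin 2 => u p.1 * v p.2.1 * w p.2.2)

/-- a product vector in ℂ² ⊗ ℂ² ⊗ ℂ² -/
def IsProd3 (ξ : Q3) : Prop := ∃ u v w : Q, ξ = tp3 u v w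

/-- the set of one-dimensional subspaces of `T` spanned by (nonzero) product vectors -/
def prodLines3 (T : Submodule ℂ Q3) : Set (Submodule ℂ Q3) :=
  {L | ∃ ξ : Q3, ξ ≠ 0 ∧ ξ ∈ T ∧ IsProd3 ξ ∧ L = Submodule.span ℂ {ξ}}

/-- a factorized vector across the bipartite cut {1} | {2,3} -/
def cut1 (u : Q) (η : Q2) : Q3 := WithLp.toLp 2 (fun p : Fin 2 × Fin 2 × Fin 2 => u p.1 * η p.2)

/-- a factorized vector across the bipartite cut {2} | {1,3} -/
def cut2 (u : Q) (η : Q2) : Q3 := WithLp.toLp 2 (fun p : Fin 2 × Fin 2 × Fin 2 => u p.2.1 * η (p.1, p.2.2))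

/-- a factorized vector across the bipartite cut {3} | {1,2} -/
def cut3 (u : Q) (η : Q2) : Q3 := WithLp.toLp 2 (fun p : Fin 2 × Fin 2 × Fin 2 => u p.2.2 * η (p.1, p.2.1))

def φ₁ : Q3 := tp3 (ket2 0) (ket2 1) plus
def φ₂ : Q3 := tp3 (ket2 1) plus (ket2 0)
def φ₃ : Q3 := tp3 plus (ket2 0) (ket2 1)
def φ₄ : Q3 := tp3 minus minus minus

/-- the span of the three-qubit UPB of Bennett et al. -/
def V3 : Submodule ℂ Q3 := Submodule.span ℂ {φ₁, φ₂, φ₃, φ₄}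

/-- the orthogonal complement of the span of the three-qubit UPB -/
def SV : Submodule ℂ Q3 := V3ᗮ

/-- the standard basis vector |xyz⟩ of ℂ² ⊗ ℂ² ⊗ ℂ² -/
def ketE (x y z : Fin 2) : Q3 := tp3 (ket2 x) (ket2 y) (ket2 z)

/-- the general element of `S_V` parametrized by `(a, b, c, d) ∈ ℂ⁴` -/
def svVec (a b c d : ℂ) : Q3 :=
  (d + 2 * (a + b + c)) • ketE 0 0 0 + a • ketE 1 0 0 + b • ketE 0 1 0 + c • ketE 0 0 1
    - a • ketE 1 1 0 - b • ketE 0 1 1 - c • ketE 1 0 1 + d • ketE 1 1 1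

open Submodule in
theorem mem_orthogonal_span_iff {𝕜 E : Type*} [RCLike 𝕜] [NormedAddCommGroup E]
    [InnerProductSpace 𝕜 E] {s : Set E} {v : E} : v ∈ (span 𝕜 s)ᗮ ↔ ∀ u ∈ s, inner 𝕜 u v = 0 := by
  rw [mem_orthogonal]
  refine ⟨fun h u hu => h u (subset_span hu), fun h u hu => ?_⟩
  induction hu using span_induction with
  | mem x hx => exact h x hx
  | zero => exact inner_zero_left _
  | add x y _ _ hx hy => rw [inner_add_left, hx, hy, add_zero]
  | smul t x _ hx => rw [inner_smul_left, hx, mul_zero]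

theorem ketE_apply (x y z : Fin 2) (p : Fin 2 × Fin 2 × Fin 2) :
    ketE x y z p = if p = (x, y, z) then 1 else 0 := by
  obtain ⟨a, b, c⟩ := p
  simp only [ketE, tp3, ket2, PiLp.toLp_apply, PiLp.single_apply, Prod.mk.injEq]
  split_ifs <;> simp_all

theorem inner_tp3 (u v w : Q) (ξ : Q3) :
    inner ℂ (tp3 u v w) ξ =
      ∑ x, ∑ y, ∑ z, (starRingEnd ℂ) (u x * v y * w z) * ξ (x, y, z) := by
  simp [PiLp.inner_apply, Fintype.sum_prod_type, tp3, mul_comm]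

theorem inner_φ₁ (ξ : Q3) : inner ℂ φ₁ ξ = (√2 : ℂ)⁻¹ * (ξ (0,1,0) + ξ (0,1,1)) := by
  simp [φ₁, inner_tp3, Fin.sum_univ_two, ket2, plus]
  ring

theorem inner_φ₂ (ξ : Q3) : inner ℂ φ₂ ξ = (√2 : ℂ)⁻¹ * (ξ (1,0,0) + ξ (1,1,0)) := by
  simp [φ₂, inner_tp3, Fin.sum_univ_two, ket2, plus]
  ring

theorem inner_φ₃ (ξ : Q3) : inner ℂ φ₃ ξ = (√2 : ℂ)⁻¹ * (ξ (0,0,1) + ξ (1,0,1)) := by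
  simp [φ₃, inner_tp3, Fin.sum_univ_two, ket2, plus]
  ring

theorem inner_φ₄ (ξ : Q3) : inner ℂ φ₄ ξ = (√2 : ℂ)⁻¹ ^ 3 *
    (ξ (0,0,0) - ξ (0,0,1) - ξ (0,1,0) + ξ (0,1,1)
      - ξ (1,0,0) + ξ (1,0,1) + ξ (1,1,0) - ξ (1,1,1)) := by
  simp [φ₄, inner_tp3, Fin.sum_univ_two, ket2, minus]
  ring

theorem mem_SV_iff_coords (ξ : Q3) :
    ξ ∈ SV ↔ ξ (0,1,0) + ξ (0,1,1) = 0 ∧ ξ (1,0,0) + ξ (1,1,0) = 0 ∧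
      ξ (0,0,1) + ξ (1,0,1) = 0 ∧
      ξ (0,0,0) - ξ (0,0,1) - ξ (0,1,0) + ξ (0,1,1)
        - ξ (1,0,0) + ξ (1,0,1) + ξ (1,1,0) - ξ (1,1,1) = 0 := by
  simp [SV, V3, mem_orthogonal_span_iff, inner_φ₁, inner_φ₂, inner_φ₃, inner_φ₄]

def svCoords (ξ : Q3) : ℂ × ℂ × ℂ × ℂ := (ξ (1,0,0), ξ (0,1,0), ξ (0,0,1), ξ (1,1,1))

theorem svCoords_svVec (a b c d : ℂ) : svCoords (svVec a b c d) = (a, b, c, d) := by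
  simp [svCoords, svVec, ketE_apply]

theorem svVec_mem_SV (a b c d : ℂ) : svVec a b c d ∈ SV := by
  rw [mem_SV_iff_coords]
  refine ⟨?_, ?_, ?_, ?_⟩ <;> simp [svVec, ketE_apply]
  ring

theorem eq_svVec_of_mem_SV {ξ : Q3} (h : ξ ∈ SV) :
    ξ = svVec (ξ (1,0,0)) (ξ (0,1,0)) (ξ (0,0,1)) (ξ (1,1,1)) := by
  obtain ⟨h₁, h₂, h₃, h₄⟩ := (mem_SV_iff_coords ξ).1 h
  ext p
  fin_cases p <;> simp [svVec, ketE_apply]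
  all_goals first
    | linear_combination h₁
    | linear_combination h₂
    | linear_combination h₃
    | linear_combination h₄ - h₁ - h₂ - h₃

theorem mem_SV_iff (ξ : Q3) : ξ ∈ SV ↔ ∃ a b c d : ℂ, ξ = svVec a b c d :=
  ⟨fun h => ⟨_, _, _, _, eq_svVec_of_mem_SV h⟩, fun ⟨a, b, c, d, h⟩ => h ▸ svVec_mem_SV a b c d⟩

def svMap : ℂ × ℂ × ℂ × ℂ →ₗ[ℂ] Q3 where
  toFun x := svVec x.1 x.2.1 x.2.2.1 x.2.2.2
  map_add' x y := by simp only [svVec, Prod.fst_add, Prod.snd_add]; module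
  map_smul' t x := by
    simp only [svVec, Prod.smul_fst, Prod.smul_snd, smul_eq_mul, RingHom.id_apply]
    module

theorem svMap_apply (a b c d : ℂ) : svMap (a, b, c, d) = svVec a b c d := rfl

theorem svMap_injective : Function.Injective svMap :=
  Function.LeftInverse.injective (g := svCoords) fun _ => svCoords_svVec _ _ _ _

theorem range_svMap : Set.range svMap = (SV : Set Q3) := by
  ext ξ
  simp [mem_SV_iff, svMap_apply, eq_comm]

theorem statement6 :
    (∀ ξ : Q3, ξ ∈ SV ↔ ∃ a b c d : ℂ, ξ = svVec a b c d) ∧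
    (∃ f : (ℂ × ℂ × ℂ × ℂ) →ₗ[ℂ] Q3,
      (∀ a b c d : ℂ, f (a, b, c, d) = svVec a b c d) ∧
      Function.Injective f ∧ Set.range f = (SV : Set Q3)) :=
  ⟨mem_SV_iff, svMap, svMap_apply, svMap_injective, range_svMap⟩
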